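/- Let π be a prime number, n a positive integer, v an integer with v² ≡ 1 (mod n), u = n / gcd(v + 1, n), and t an integer such that r = v + n·t satisfies r² ≡ 1 (mod πn). Then the affine map e^{πu}.r : ℤ_{πn} → ℤ_{πn}, x ↦ r·x + π·u, is an involution (its composition with itself is the identity of ℤ_{πn}), and for every x ∈ ℤ_n, ι(v·x + u) = r·ι(x) + π·u in ℤ_{πn}. -/

import Mathlib

/-- The affine map `e^a.b : ZMod m → ZMod m`, `x ↦ b*x + a`. -/
def affineMap (m : ℕ) (a b : ℤ) : ZMod m → ZMod m :=
  fun x => (b : ZMod m) * x + (a : ZMod m)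

/-- `e^a.b` is a quasipolarity if it is an involution without fixed points. -/
def IsQuasipolarity (m : ℕ) (a b : ℤ) : Prop :=
  (affineMap m a b) ∘ (affineMap m a b) = id ∧ ∀ x : ZMod m, affineMap m a b x ≠ x

/-- The canonical injection `ι : ZMod n → ZMod (p*n)`, sending the class of `x`
modulo `n` to the class of `p*x` modulo `p*n`. -/
def iota (p n : ℕ) (x : ZMod n) : ZMod (p * n) := ((p * x.val : ℕ) : ZMod (p * n))

/-!
Composing `x ↦ r x + p u` with itself gives `x ↦ r² x + (r + 1) p u`. Here `r² = 1` modulo `p n`,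
and `(r + 1) p u = p (v + 1) u + p n t u` vanishes modulo `p n` because `n ∣ (v + 1) u` by the
choice of `u`. On integer representatives `ι` is multiplication by `p`, and `r ≡ v (mod n)` gives
`p r ≡ p v (mod p n)`, which is the intertwining identity.
-/

theorem affineMap_comp_self {m : ℕ} {a b : ℤ} (hb : b ^ 2 ≡ 1 [ZMOD m])
    (hab : (m : ℤ) ∣ (b + 1) * a) : affineMap m a b ∘ affineMap m a b = id := by
  have hb' : (b : ZMod m) ^ 2 = 1 := by
    exact_mod_cast (ZMod.intCast_eq_intCast_iff _ _ m).mpr hb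
  have hab' : ((b : ZMod m) + 1) * a = 0 := by
    exact_mod_cast (ZMod.intCast_zmod_eq_zero_iff_dvd _ m).mpr hab
  funext x
  simp only [Function.comp_apply, affineMap, id_eq]
  linear_combination x * hb' + hab'

theorem Int.dvd_mul_div_gcd (a : ℤ) (n : ℕ) : (n : ℤ) ∣ a * (n / Int.gcd a n : ℕ) := by
  obtain ⟨c, hc⟩ := Int.gcd_dvd_left a n
  have hgn : ((Int.gcd a n * (n / Int.gcd a n) : ℕ) : ℤ) = n :=
    congrArg _ (Nat.mul_div_cancel' (by exact_mod_cast Int.gcd_dvd_right a n))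
  exact ⟨c, by rw [Nat.cast_mul] at hgn; linear_combination (n / Int.gcd a n : ℕ) * hc + c * hgn⟩

theorem iota_intCast (p : ℕ) {n : ℕ} [NeZero n] (k : ℤ) :
    iota p n (k : ZMod n) = ((p * k : ℤ) : ZMod (p * n)) := by
  rw [iota, ← Int.cast_natCast, ZMod.intCast_eq_intCast_iff]
  push_cast
  rw [ZMod.val_intCast]
  exact (Int.mod_modEq k n).mul_left' (c := p)

theorem stmt11_general (p n : ℕ) (hn : 0 < n) (v : ℤ)
    (u : ℕ) (hu : u = n / Int.gcd (v + 1) (n : ℤ))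
    (t : ℤ) (hr : (v + (n : ℤ) * t) ^ 2 ≡ 1 [ZMOD ((p : ℤ) * n)]) :
    (affineMap (p * n) ((p : ℤ) * u) (v + (n : ℤ) * t)) ∘
        (affineMap (p * n) ((p : ℤ) * u) (v + (n : ℤ) * t)) = id ∧
      ∀ x : ZMod n,
        iota p n ((v : ZMod n) * x + (u : ZMod n)) =
          ((v + (n : ℤ) * t : ℤ) : ZMod (p * n)) * iota p n x
            + (((p : ℤ) * u : ℤ) : ZMod (p * n)) := by
  have : NeZero n := ⟨hn.ne'⟩
  constructor
  · have hvu : (n : ℤ) ∣ (v + 1) * u := hu ▸ Int.dvd_mul_div_gcd (v + 1) n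
    refine affineMap_comp_self (by exact_mod_cast hr) ?_
    have hsplit : (v + n * t + 1) * (p * u) = p * ((v + 1) * u) + p * n * (t * u) := by ring
    push_cast
    rw [hsplit]
    exact dvd_add (mul_dvd_mul_left _ hvu) (dvd_mul_right _ _)
  · intro x
    obtain ⟨k, rfl⟩ := ZMod.intCast_surjective x
    have hpn : (p : ZMod (p * n)) * n = 0 := by exact_mod_cast ZMod.natCast_self (p * n)
    rw [← Int.cast_natCast u, ← Int.cast_mul, ← Int.cast_add, iota_intCast, iota_intCast]
    push_cast
    linear_combination (-t * k) * hpn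

theorem stmt11 (p n : ℕ) (hp : p.Prime) (hn : 0 < n) (v : ℤ)
    (hv : v ^ 2 ≡ 1 [ZMOD (n : ℤ)]) (u : ℕ) (hu : u = n / Int.gcd (v + 1) (n : ℤ))
    (t : ℤ) (hr : (v + (n : ℤ) * t) ^ 2 ≡ 1 [ZMOD ((p : ℤ) * n)]) :
    (affineMap (p * n) ((p : ℤ) * u) (v + (n : ℤ) * t)) ∘
        (affineMap (p * n) ((p : ℤ) * u) (v + (n : ℤ) * t)) = id ∧
      ∀ x : ZMod n,
        iota p n ((v : ZMod n) * x + (u : ZMod n)) =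
          ((v + (n : ℤ) * t : ℤ) : ZMod (p * n)) * iota p n x
            + (((p : ℤ) * u : ℤ) : ZMod (p * n)) :=
  stmt11_general p n hn v u hu t hr
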